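/- Let σ be a cyclic permutation of [n] and let A be a collection of intervals along σ that contains neither Y nor Y' as an induced subposet. Then |A| ≤ 2n. -/

import Mathlib

open Finset

/-- The family `𝒜` contains `Y` as an induced subposet: four pairwise distinct sets
`w, x, y, z ∈ 𝒜` with `w ⊆ x`, `x ⊆ y`, `x ⊆ z`, `y ⊄ z` and `z ⊄ y`. -/
def ContainsInducedY {n : ℕ} (𝒜 : Finset (Finset (Fin n))) : Prop :=
  ∃ w x y z : Finset (Fin n),
    w ∈ 𝒜 ∧ x ∈ 𝒜 ∧ y ∈ 𝒜 ∧ z ∈ 𝒜 ∧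
    w ≠ x ∧ w ≠ y ∧ w ≠ z ∧ x ≠ y ∧ x ≠ z ∧ y ≠ z ∧
    w ⊆ x ∧ x ⊆ y ∧ x ⊆ z ∧ ¬ y ⊂ z ∧ ¬ z ⊂ y

/-- The family `𝒜` contains `Y'` as an induced subposet: four pairwise distinct sets
`w, x, y, z ∈ 𝒜` with `x ⊆ w`, `y ⊆ x`, `z ⊆ x`, `y ⊄ z` and `z ⊄ y`. -/
def ContainsInducedY' {n : ℕ} (𝒜 : Finset (Finset (Fin n))) : Prop :=
  ∃ w x y z : Finset (Fin n),
    w ∈ 𝒜 ∧ x ∈ 𝒜 ∧ y ∈ 𝒜 ∧ z ∈ 𝒜 ∧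
    w ≠ x ∧ w ≠ y ∧ w ≠ z ∧ x ≠ y ∧ x ≠ z ∧ y ≠ z ∧
    x ⊆ w ∧ y ⊆ x ∧ z ⊆ x ∧ ¬ y ⊂ z ∧ ¬ z ⊂ y

/-- The interval `{x i, x (i+1), …, x (i+t)}` along the cyclic permutation `σ`
(indices taken modulo `n`). -/
def cycInterval (n : ℕ) (σ : ZMod n ≃ Fin n) (i : ZMod n) (t : ℕ) : Finset (Fin n) :=
  (Finset.range (t + 1)).image fun s : ℕ => σ (i + (s : ZMod n))

/-- `I` is an interval along the cyclic permutation `σ`; neither `∅` nor `[n]`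
is an interval. -/
def IsCycInterval (n : ℕ) (σ : ZMod n ≃ Fin n) (I : Finset (Fin n)) : Prop :=
  ∃ (i : ZMod n) (t : ℕ), t ≤ n - 2 ∧ I = cycInterval n σ i t

/-!
An interval along `σ` has at most `n - 1` elements, so its start and its end are well defined, and
two intervals with a common start, or a common end, are nested. Deleting an interval that is the
only one with its start (or end) lowers the number of starts (or ends) in use by one, so it
suffices to show `|𝒜| ≤ #starts + #ends` when every start and every end is shared by two members.
Then no three members share a start: they would form a chain `I₁ ⊂ I₂ ⊂ I₃`, and a member
`J ≠ I₂` with the end of `I₂` is nested with `I₂`; if `I₂ ⊂ J` then `J` and `I₃` are incomparable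
and give `Y`, if `J ⊂ I₂` then `J` and `I₁` are incomparable and give `Y'`. Symmetrically no three
share an end, so `|𝒜| ≤ 2 #starts` and `|𝒜| ≤ 2 #ends`.
-/

theorem card_image_erase_lt {α β : Type*} [DecidableEq α] [DecidableEq β] {f : α → β}
    {𝒜 : Finset α} {x : α} (hx : x ∈ 𝒜) (hfx : ∀ y ∈ 𝒜, y ≠ x → f y ≠ f x) :
    #((𝒜.erase x).image f) < #(𝒜.image f) := by
  refine card_lt_card ((ssubset_iff_of_subset (image_subset_image (erase_subset x 𝒜))).mpr
    ⟨f x, mem_image_of_mem f hx, ?_⟩)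
  intro hfx'
  obtain ⟨y, hy, hfy⟩ := mem_image.mp hfx'
  exact hfx y (mem_of_mem_erase hy) (ne_of_mem_erase hy) hfy

theorem card_le_card_image_add_card_image {α β γ : Type*} [DecidableEq α] [DecidableEq β]
    [DecidableEq γ] (f : α → β) (g : α → γ) (𝒜 : Finset α)
    (hf : ∀ ℬ ⊆ 𝒜, (∀ x ∈ ℬ, ∃ y ∈ ℬ, y ≠ x ∧ g y = g x) → ∀ b, #{x ∈ ℬ | f x = b} ≤ 2)
    (hg : ∀ ℬ ⊆ 𝒜, (∀ x ∈ ℬ, ∃ y ∈ ℬ, y ≠ x ∧ f y = f x) → ∀ c, #{x ∈ ℬ | g x = c} ≤ 2) :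
    #𝒜 ≤ #(𝒜.image f) + #(𝒜.image g) := by
  induction 𝒜 using Finset.strongInduction with
  | H 𝒜 ih =>
  by_cases hmates : (∀ x ∈ 𝒜, ∃ y ∈ 𝒜, y ≠ x ∧ f y = f x) ∧
      (∀ x ∈ 𝒜, ∃ y ∈ 𝒜, y ≠ x ∧ g y = g x)
  · have hcf := card_le_mul_card_image 𝒜 2 fun b _ ↦ hf 𝒜 subset_rfl hmates.2 b
    have hcg := card_le_mul_card_image 𝒜 2 fun c _ ↦ hg 𝒜 subset_rfl hmates.1 c
    omega
  · -- an `x` alone in its fibre can be removed, losing one value of `f` or of `g`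
    obtain ⟨x, hx, hlone⟩ : ∃ x ∈ 𝒜, (∀ y ∈ 𝒜, y ≠ x → f y ≠ f x) ∨
        (∀ y ∈ 𝒜, y ≠ x → g y ≠ g x) := by
      by_contra! h
      exact hmates ⟨fun x hx ↦ (h x hx).1, fun x hx ↦ (h x hx).2⟩
    have hsub := erase_subset x 𝒜
    have hrec := ih (𝒜.erase x) (erase_ssubset hx) (fun ℬ h ↦ hf ℬ (h.trans hsub))
      (fun ℬ h ↦ hg ℬ (h.trans hsub))
    have hcard := card_erase_of_mem hx
    have hf' := card_le_card (image_subset_image (f := f) hsub)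
    have hg' := card_le_card (image_subset_image (f := g) hsub)
    have hpos := card_pos.mpr ⟨x, hx⟩
    rcases hlone with hfx | hgx
    · have := card_image_erase_lt hx hfx
      omega
    · have := card_image_erase_lt hx hgx
      omega

/-- Both endpoint maps of a family of arcs satisfy these axioms; as they are symmetric in the two
endpoints, the chain argument below serves for starts and ends alike. -/
structure IsEndpointMap {α : Type*} (𝒜 : Finset (Finset α)) (s : Finset α → α) : Prop where
  mem : ∀ I ∈ 𝒜, s I ∈ I
  eq_of_subset : ∀ I ∈ 𝒜, ∀ J ∈ 𝒜, I ⊆ J → s J ∈ I → s I = s J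
  subset_or_subset : ∀ I ∈ 𝒜, ∀ J ∈ 𝒜, s I = s J → I ⊆ J ∨ J ⊆ I

section InducedY

variable {n : ℕ} {𝒜 : Finset (Finset (Fin n))}

theorem ContainsInducedY.of_not_subset {w x y z : Finset (Fin n)} (hw : w ∈ 𝒜) (hx : x ∈ 𝒜)
    (hy : y ∈ 𝒜) (hz : z ∈ 𝒜) (hne : w ≠ x) (hwx : w ⊆ x) (hxy : x ⊆ y) (hxz : x ⊆ z)
    (hyz : ¬ y ⊆ z) (hzy : ¬ z ⊆ y) : ContainsInducedY 𝒜 := by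
  refine ⟨w, x, y, z, hw, hx, hy, hz, hne, ?_, ?_, ?_, ?_, ?_, hwx, hxy, hxz,
    fun h ↦ hyz h.subset, fun h ↦ hzy h.subset⟩
  · rintro rfl; exact hyz (hwx.trans hxz)
  · rintro rfl; exact hzy (hwx.trans hxy)
  · rintro rfl; exact hyz hxz
  · rintro rfl; exact hzy hxy
  · rintro rfl; exact hyz subset_rfl

theorem ContainsInducedY'.of_not_subset {w x y z : Finset (Fin n)} (hw : w ∈ 𝒜) (hx : x ∈ 𝒜)
    (hy : y ∈ 𝒜) (hz : z ∈ 𝒜) (hne : w ≠ x) (hxw : x ⊆ w) (hyx : y ⊆ x) (hzx : z ⊆ x)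
    (hyz : ¬ y ⊆ z) (hzy : ¬ z ⊆ y) : ContainsInducedY' 𝒜 := by
  refine ⟨w, x, y, z, hw, hx, hy, hz, hne, ?_, ?_, ?_, ?_, ?_, hxw, hyx, hzx,
    fun h ↦ hyz h.subset, fun h ↦ hzy h.subset⟩
  · rintro rfl; exact hzy (hzx.trans hxw)
  · rintro rfl; exact hyz (hyx.trans hxw)
  · rintro rfl; exact hzy hzx
  · rintro rfl; exact hyz hyx
  · rintro rfl; exact hyz subset_rfl

variable {s e : Finset (Fin n) → Fin n}

theorem containsInducedY_or_containsInducedY'_of_chain (hs : IsEndpointMap 𝒜 s)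
    (he : IsEndpointMap 𝒜 e) (hse : ∀ I ∈ 𝒜, ∀ J ∈ 𝒜, s I = s J → e I = e J → I = J)
    {I₁ I₂ I₃ J : Finset (Fin n)} (h₁ : I₁ ∈ 𝒜) (h₂ : I₂ ∈ 𝒜) (h₃ : I₃ ∈ 𝒜) (hJ : J ∈ 𝒜)
    (h₁₂ : I₁ ⊆ I₂) (h₂₃ : I₂ ⊆ I₃) (hne₁₂ : I₁ ≠ I₂) (hne₂₃ : I₂ ≠ I₃)
    (hs₁₂ : s I₁ = s I₂) (hs₂₃ : s I₂ = s I₃) (hJ₂ : J ≠ I₂) (heJ : e J = e I₂) :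
    ContainsInducedY 𝒜 ∨ ContainsInducedY' 𝒜 := by
  rcases he.subset_or_subset J hJ I₂ h₂ heJ with hJ₂sub | h₂J
  · refine Or.inr (ContainsInducedY'.of_not_subset h₃ h₂ hJ h₁ hne₂₃.symm h₂₃ hJ₂sub h₁₂ ?_ ?_)
    · intro hJ₁
      have he₁₂ := he.eq_of_subset I₁ h₁ I₂ h₂ h₁₂ (heJ ▸ hJ₁ (he.mem J hJ))
      exact hne₁₂ (hse I₁ h₁ I₂ h₂ hs₁₂ he₁₂)
    · intro h₁J
      have hsJ := hs.eq_of_subset J hJ I₂ h₂ hJ₂sub (hs₁₂ ▸ h₁J (hs.mem I₁ h₁))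
      exact hJ₂ (hse J hJ I₂ h₂ hsJ heJ)
  · refine Or.inl (ContainsInducedY.of_not_subset h₁ h₂ hJ h₃ hne₁₂ h₁₂ h₂J h₂₃ ?_ ?_)
    · intro hJ₃
      have hsJ := hs.eq_of_subset J hJ I₃ h₃ hJ₃ (hs₂₃ ▸ h₂J (hs.mem I₂ h₂))
      exact hJ₂ (hse J hJ I₂ h₂ (hsJ.trans hs₂₃.symm) heJ)
    · intro h₃J
      have he₃ := he.eq_of_subset I₃ h₃ J hJ h₃J (heJ ▸ h₂₃ (he.mem I₂ h₂))
      exact hne₂₃ (hse I₂ h₂ I₃ h₃ hs₂₃ (heJ.symm.trans he₃.symm))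

theorem IsEndpointMap.card_filter_le_two (hs : IsEndpointMap 𝒜 s) (he : IsEndpointMap 𝒜 e)
    (hse : ∀ I ∈ 𝒜, ∀ J ∈ 𝒜, s I = s J → e I = e J → I = J)
    (hY : ¬ ContainsInducedY 𝒜) (hY' : ¬ ContainsInducedY' 𝒜) {ℬ : Finset (Finset (Fin n))}
    (hℬ : ℬ ⊆ 𝒜) (hmate : ∀ I ∈ ℬ, ∃ J ∈ ℬ, J ≠ I ∧ e J = e I) (a : Fin n) :
    #{I ∈ ℬ | s I = a} ≤ 2 := by
  by_contra! h3
  set S := {I ∈ ℬ | s I = a}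
  have hS𝒜 : ∀ I ∈ S, I ∈ 𝒜 := fun I hI ↦ hℬ (mem_filter.mp hI).1
  have hSs : ∀ I ∈ S, s I = a := fun I hI ↦ (mem_filter.mp hI).2
  have hchain : ∀ I ∈ S, ∀ J ∈ S, #I ≤ #J → I ⊆ J := fun I hI J hJ hc ↦
    (hs.subset_or_subset I (hS𝒜 I hI) J (hS𝒜 J hJ) ((hSs I hI).trans (hSs J hJ).symm)).elim id
      fun hJI ↦ by rw [eq_of_subset_of_card_le hJI hc]
  have hS : S.Nonempty := card_pos.mp (by omega)
  obtain ⟨I₁, h₁, hmin⟩ := S.exists_min_image card hS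
  obtain ⟨I₃, h₃, hmax⟩ := S.exists_max_image card hS
  obtain ⟨I₂, h₂, hne₁, hne₃⟩ : ∃ I₂ ∈ S, I₂ ≠ I₁ ∧ I₂ ≠ I₃ := by
    have h1 := pred_card_le_card_erase (s := S) (a := I₁)
    have h2 := pred_card_le_card_erase (s := S.erase I₁) (a := I₃)
    obtain ⟨I₂, hI₂⟩ := card_pos.mp (show 0 < #((S.erase I₁).erase I₃) by omega)
    simp only [mem_erase] at hI₂
    exact ⟨I₂, hI₂.2.2, hI₂.2.1, hI₂.1⟩
  obtain ⟨J, hJ, hJ₂, heJ⟩ := hmate I₂ (mem_filter.mp h₂).1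
  exact (containsInducedY_or_containsInducedY'_of_chain hs he hse (hS𝒜 I₁ h₁) (hS𝒜 I₂ h₂)
    (hS𝒜 I₃ h₃) (hℬ hJ) (hchain I₁ h₁ I₂ h₂ (hmin I₂ h₂)) (hchain I₂ h₂ I₃ h₃ (hmax I₂ h₂))
    hne₁.symm hne₃ ((hSs I₁ h₁).trans (hSs I₂ h₂).symm) ((hSs I₂ h₂).trans (hSs I₃ h₃).symm)
    hJ₂ heJ).elim hY hY'

theorem IsEndpointMap.card_le_card_image_add_card_image (hs : IsEndpointMap 𝒜 s)
    (he : IsEndpointMap 𝒜 e) (hse : ∀ I ∈ 𝒜, ∀ J ∈ 𝒜, s I = s J → e I = e J → I = J)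
    (hY : ¬ ContainsInducedY 𝒜) (hY' : ¬ ContainsInducedY' 𝒜) :
    #𝒜 ≤ #(𝒜.image s) + #(𝒜.image e) :=
  _root_.card_le_card_image_add_card_image s e 𝒜
    (fun _ hℬ hmate ↦ hs.card_filter_le_two he hse hY hY' hℬ hmate)
    (fun _ hℬ hmate ↦ he.card_filter_le_two hs (fun I hI J hJ h₁ h₂ ↦ hse I hI J hJ h₂ h₁)
      hY hY' hℬ hmate)

end InducedY

section Arcs

variable {n : ℕ} (σ : ZMod n ≃ Fin n)

theorem mem_cycInterval_self_add {i : ZMod n} {t k : ℕ} (hk : k ≤ t) :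
    σ (i + k) ∈ cycInterval n σ i t :=
  mem_image.mpr ⟨k, mem_range.mpr (Nat.lt_succ_of_le hk), rfl⟩

variable [NeZero n]

theorem mem_cycInterval {i : ZMod n} {t : ℕ} {x : Fin n} :
    x ∈ cycInterval n σ i t ↔ (σ.symm x - i).val ≤ t := by
  simp only [cycInterval, mem_image, mem_range]
  constructor
  · rintro ⟨s, hs, rfl⟩
    rw [Equiv.symm_apply_apply, add_sub_cancel_left, ZMod.val_natCast]
    exact (Nat.mod_le s n).trans (Nat.lt_succ_iff.mp hs)
  · intro hx
    exact ⟨(σ.symm x - i).val, Nat.lt_succ_of_le hx, by simp⟩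

theorem cycInterval_subset_cycInterval_iff {i j : ZMod n} {t u : ℕ} (ht : t ≤ n - 2)
    (hu : u ≤ n - 2) :
    cycInterval n σ i t ⊆ cycInterval n σ j u ↔ (i - j).val + t ≤ u := by
  have hn := NeZero.pos n
  have hd := ZMod.val_lt (i - j)
  constructor
  · intro hsub
    -- the last point of the first arc, or the last point before `j` if that arc wraps past `j`
    have hk := (mem_cycInterval σ).mp <|
      hsub (mem_cycInterval_self_add σ (min_le_left t (n - 1 - (i - j).val)))
    have hshift : σ.symm (σ (i + (min t (n - 1 - (i - j).val) : ℕ))) - j =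
        (((i - j).val + min t (n - 1 - (i - j).val) : ℕ) : ZMod n) := by
      rw [Equiv.symm_apply_apply]; push_cast [ZMod.natCast_zmod_val]; ring
    rw [hshift, ZMod.val_cast_of_lt (by omega)] at hk
    omega
  · intro hle x hx
    rw [mem_cycInterval] at hx ⊢
    calc (σ.symm x - j).val = ((σ.symm x - i) + (i - j)).val := by rw [sub_add_sub_cancel]
      _ ≤ (σ.symm x - i).val + (i - j).val := ZMod.val_add_le _ _
      _ ≤ u := by omega

variable {σ}

theorem cycInterval_injective {i j : ZMod n} {t u : ℕ} (ht : t ≤ n - 2) (hu : u ≤ n - 2)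
    (h : cycInterval n σ i t = cycInterval n σ j u) : i = j ∧ t = u := by
  have hij := (cycInterval_subset_cycInterval_iff σ ht hu).mp h.subset
  have hji := (cycInterval_subset_cycInterval_iff σ hu ht).mp h.symm.subset
  exact ⟨sub_eq_zero.mp ((ZMod.val_eq_zero _).mp (by omega)), by omega⟩

theorem eq_of_cycInterval_subset_of_mem {i j : ZMod n} {t u : ℕ} (ht : t ≤ n - 2)
    (hu : u ≤ n - 2) (hsub : cycInterval n σ i t ⊆ cycInterval n σ j u)
    (hj : σ j ∈ cycInterval n σ i t) : i = j := by
  have hle := (cycInterval_subset_cycInterval_iff σ ht hu).mp hsub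
  rw [mem_cycInterval, Equiv.symm_apply_apply, ← neg_sub, ZMod.neg_val] at hj
  have := ZMod.val_lt (i - j)
  split_ifs at hj with h
  · exact sub_eq_zero.mp h
  · omega

theorem add_eq_of_cycInterval_subset_of_mem {i j : ZMod n} {t u : ℕ} (ht : t ≤ n - 2)
    (hu : u ≤ n - 2) (hsub : cycInterval n σ i t ⊆ cycInterval n σ j u)
    (hj : σ (j + u) ∈ cycInterval n σ i t) : i + t = j + u := by
  have hn := NeZero.pos n
  have hle := (cycInterval_subset_cycInterval_iff σ ht hu).mp hsub
  have hshift : j + u - i = ((u - (i - j).val : ℕ) : ZMod n) := by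
    rw [Nat.cast_sub (by omega), ZMod.natCast_zmod_val]; ring
  rw [mem_cycInterval, Equiv.symm_apply_apply, hshift, ZMod.val_cast_of_lt (by omega)] at hj
  calc i + t = j + ((i - j).val + t : ℕ) := by push_cast [ZMod.natCast_zmod_val]; ring
    _ = j + u := by rw [show (i - j).val + t = u by omega]

theorem cycInterval_subset_of_add_eq {i j : ZMod n} {t u : ℕ} (ht : t ≤ n - 2)
    (hu : u ≤ n - 2) (h : i + t = j + u) (htu : t ≤ u) :
    cycInterval n σ i t ⊆ cycInterval n σ j u := by
  have hn := NeZero.pos n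
  have hshift : i - j = ((u - t : ℕ) : ZMod n) := by
    rw [Nat.cast_sub htu]; linear_combination h
  rw [cycInterval_subset_cycInterval_iff σ ht hu, hshift, ZMod.val_cast_of_lt (by omega)]
  omega

end Arcs

section CycEndpoints

variable {n : ℕ} {σ : ZMod n ≃ Fin n}

/-- The start and length of `I` as an interval, unique by `cycInterval_injective`. -/
noncomputable def cycParams (σ : ZMod n ≃ Fin n) (I : Finset (Fin n)) : ZMod n × ℕ :=
  Classical.epsilon fun p ↦ p.2 ≤ n - 2 ∧ I = cycInterval n σ p.1 p.2

noncomputable def cycStart (σ : ZMod n ≃ Fin n) (I : Finset (Fin n)) : Fin n :=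
  σ (cycParams σ I).1

noncomputable def cycEnd (σ : ZMod n ≃ Fin n) (I : Finset (Fin n)) : Fin n :=
  σ ((cycParams σ I).1 + (cycParams σ I).2)

variable [NeZero n]

theorem cycParams_cycInterval {i : ZMod n} {t : ℕ} (ht : t ≤ n - 2) :
    cycParams σ (cycInterval n σ i t) = (i, t) := by
  obtain ⟨hu, heq⟩ := Classical.epsilon_spec
    (p := fun p : ZMod n × ℕ ↦ p.2 ≤ n - 2 ∧ cycInterval n σ i t = cycInterval n σ p.1 p.2)
    ⟨(i, t), ht, rfl⟩
  obtain ⟨hi, ht⟩ := cycInterval_injective hu ht heq.symm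
  exact Prod.ext hi ht

theorem cycStart_cycInterval {i : ZMod n} {t : ℕ} (ht : t ≤ n - 2) :
    cycStart σ (cycInterval n σ i t) = σ i := by
  rw [cycStart, cycParams_cycInterval ht]

theorem cycEnd_cycInterval {i : ZMod n} {t : ℕ} (ht : t ≤ n - 2) :
    cycEnd σ (cycInterval n σ i t) = σ (i + t) := by
  rw [cycEnd, cycParams_cycInterval ht]

theorem IsCycInterval.eq_of_cycStart_eq_of_cycEnd_eq {I J : Finset (Fin n)}
    (hI : IsCycInterval n σ I) (hJ : IsCycInterval n σ J) (hs : cycStart σ I = cycStart σ J)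
    (he : cycEnd σ I = cycEnd σ J) : I = J := by
  obtain ⟨i, t, ht, rfl⟩ := hI
  obtain ⟨j, u, hu, rfl⟩ := hJ
  rw [cycStart_cycInterval ht, cycStart_cycInterval hu, σ.apply_eq_iff_eq] at hs
  rw [cycEnd_cycInterval ht, cycEnd_cycInterval hu, σ.apply_eq_iff_eq, hs] at he
  have hn := NeZero.pos n
  have htu := congrArg ZMod.val (add_left_cancel he)
  rw [ZMod.val_cast_of_lt (by omega), ZMod.val_cast_of_lt (by omega)] at htu
  rw [hs, htu]

variable {𝒜 : Finset (Finset (Fin n))}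

theorem isEndpointMap_cycStart (h𝒜 : ∀ I ∈ 𝒜, IsCycInterval n σ I) :
    IsEndpointMap 𝒜 (cycStart σ) where
  mem I hI := by
    obtain ⟨i, t, ht, rfl⟩ := h𝒜 I hI
    rw [cycStart_cycInterval ht, mem_cycInterval, Equiv.symm_apply_apply, sub_self,
      ZMod.val_zero]
    exact Nat.zero_le t
  eq_of_subset I hI J hJ hsub hmem := by
    obtain ⟨i, t, ht, rfl⟩ := h𝒜 I hI
    obtain ⟨j, u, hu, rfl⟩ := h𝒜 J hJ
    rw [cycStart_cycInterval hu] at hmem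
    rw [cycStart_cycInterval ht, cycStart_cycInterval hu,
      eq_of_cycInterval_subset_of_mem ht hu hsub hmem]
  subset_or_subset I hI J hJ h := by
    obtain ⟨i, t, ht, rfl⟩ := h𝒜 I hI
    obtain ⟨j, u, hu, rfl⟩ := h𝒜 J hJ
    rw [cycStart_cycInterval ht, cycStart_cycInterval hu, σ.apply_eq_iff_eq] at h
    rw [cycInterval_subset_cycInterval_iff σ ht hu, cycInterval_subset_cycInterval_iff σ hu ht,
      h, sub_self, ZMod.val_zero, zero_add, zero_add]
    exact le_total t u

theorem isEndpointMap_cycEnd (h𝒜 : ∀ I ∈ 𝒜, IsCycInterval n σ I) :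
    IsEndpointMap 𝒜 (cycEnd σ) where
  mem I hI := by
    obtain ⟨i, t, ht, rfl⟩ := h𝒜 I hI
    rw [cycEnd_cycInterval ht]
    exact mem_cycInterval_self_add σ le_rfl
  eq_of_subset I hI J hJ hsub hmem := by
    obtain ⟨i, t, ht, rfl⟩ := h𝒜 I hI
    obtain ⟨j, u, hu, rfl⟩ := h𝒜 J hJ
    rw [cycEnd_cycInterval hu] at hmem
    rw [cycEnd_cycInterval ht, cycEnd_cycInterval hu,
      add_eq_of_cycInterval_subset_of_mem ht hu hsub hmem]
  subset_or_subset I hI J hJ h := by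
    obtain ⟨i, t, ht, rfl⟩ := h𝒜 I hI
    obtain ⟨j, u, hu, rfl⟩ := h𝒜 J hJ
    rw [cycEnd_cycInterval ht, cycEnd_cycInterval hu, σ.apply_eq_iff_eq] at h
    exact (le_total t u).imp (cycInterval_subset_of_add_eq ht hu h)
      (cycInterval_subset_of_add_eq hu ht h.symm)

end CycEndpoints

/-- A collection of intervals along a cyclic permutation of `[n]` containing neither `Y`
nor `Y'` as an induced subposet has at most `2n` members. -/
theorem induced_Y_intervals_bound (n : ℕ) (σ : ZMod n ≃ Fin n)
    (𝒜 : Finset (Finset (Fin n))) (hInt : ∀ I ∈ 𝒜, IsCycInterval n σ I)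
    (hY : ¬ ContainsInducedY 𝒜) (hY' : ¬ ContainsInducedY' 𝒜) :
    𝒜.card ≤ 2 * n := by
  have : NeZero n := ⟨by rintro rfl; exact (σ 0).elim0⟩
  have hcard : ∀ f : Finset (Fin n) → Fin n, #(𝒜.image f) ≤ n := fun f ↦
    (card_le_univ _).trans_eq (Fintype.card_fin n)
  calc 𝒜.card ≤ #(𝒜.image (cycStart σ)) + #(𝒜.image (cycEnd σ)) :=
        (isEndpointMap_cycStart hInt).card_le_card_image_add_card_image
          (isEndpointMap_cycEnd hInt)
          (fun I hI J hJ ↦ (hInt I hI).eq_of_cycStart_eq_of_cycEnd_eq (hInt J hJ)) hY hY'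
    _ ≤ n + n := add_le_add (hcard _) (hcard _)
    _ = 2 * n := (two_mul n).symm
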